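/- arXiv:1605.02470 — 2 statements merged into one kernel-verified Lean document; each statement's English description precedes it below -/
import Mathlib

section
/- Under the randomized Kaczmarz scheme, if λ_min ∈ (0,1), then for every n ≥ 0 the expected squared error satisfies E[‖e(n)‖²] ≤ (1 − λ_min)^n · ‖e(0)‖², so E[‖e(n)‖²] → 0 exponentially fast. -/
/-!
The error `e k = x k - x*` evolves by `e (k+1) = e k - (⟪a i, e k⟫ / ‖a i‖²) • a i` with `i = ξ k`,
an orthogonal projection, so `‖e (k+1)‖² = ‖e k‖² - ⟪a i / ‖a i‖, e k⟫²`. Each step adds a multiple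
of a row, so `e k` stays orthogonal to `ker A`, and averaging over the fresh index (independent of
`e k`) gives `E ‖e (k+1)‖² ≤ (1 - λ_min) E ‖e k‖²` by the definition of `λ_min`. Concretely, `x k` is
a deterministic function of the word `(ξ 0, …, ξ (k-1))`, whose law is the product of the `p i`, so
every expectation is a weighted sum over words and the contraction iterates by induction on the
word length.
-/

open scoped InnerProductSpace
open MeasureTheory

/-- The `i`-th row of a matrix, viewed as a vector of Euclidean space. -/
def Matrix.rowE {m n : ℕ} (A : Matrix (Fin m) (Fin n) ℝ) (i : Fin m) :
    EuclideanSpace ℝ (Fin n) := WithLp.toLp 2 (fun j => A i j)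

/-- The normalized `i`-th row of a matrix. -/
noncomputable def Matrix.nrowE {m n : ℕ} (A : Matrix (Fin m) (Fin n) ℝ) (i : Fin m) :
    EuclideanSpace ℝ (Fin n) := (‖A.rowE i‖)⁻¹ • A.rowE i

def wordIterate {α ι : Type*} (T : α → ι → α) (x₀ : α) : (k : ℕ) → (Fin k → ι) → α
  | 0, _ => x₀
  | k + 1, w => T (wordIterate T x₀ k (Fin.init w)) (w (Fin.last k))

namespace wordIterate

variable {α ι : Type*} (T : α → ι → α) (x₀ : α)

@[simp]
lemma zero (w : Fin 0 → ι) : wordIterate T x₀ 0 w = x₀ := rfl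

@[simp]
lemma snoc {k : ℕ} (w : Fin k → ι) (i : ι) :
    wordIterate T x₀ (k + 1) (Fin.snoc w i) = T (wordIterate T x₀ k w) i := by
  simp [wordIterate]

lemma mem {S : Set α} (hS : ∀ x ∈ S, ∀ i, T x i ∈ S) (hx₀ : x₀ ∈ S) :
    ∀ {k : ℕ} (w : Fin k → ι), wordIterate T x₀ k w ∈ S
  | 0, _ => hx₀
  | k + 1, w => by
    rw [← Fin.snoc_init_self w, snoc]
    exact hS _ (mem hS hx₀ _) _

end wordIterate

lemma Fin.sum_prod_mul_snoc {ι : Type*} [Fintype ι] (p : ι → ℝ) {k : ℕ}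
    (f : (Fin (k + 1) → ι) → ℝ) :
    ∑ w : Fin (k + 1) → ι, (∏ j, p (w j)) * f w =
      ∑ w : Fin k → ι, (∏ j, p (w j)) * ∑ i, p i * f (Fin.snoc w i) := by
  rw [← (Fin.snocEquiv fun _ => ι).sum_comp, Fintype.sum_prod_type, Finset.sum_comm]
  refine Fintype.sum_congr _ _ fun w => ?_
  rw [Finset.mul_sum]
  refine Fintype.sum_congr _ _ fun i => ?_
  simp [Fin.snocEquiv, Fin.prod_univ_castSucc, mul_assoc]

theorem sum_prod_mul_wordIterate_le {α ι : Type*} [Fintype ι] {p : ι → ℝ} (hp : ∀ i, 0 ≤ p i)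
    {T : α → ι → α} {V : α → ℝ} {S : Set α} {c : ℝ} (hc : 0 ≤ c)
    (hS : ∀ x ∈ S, ∀ i, T x i ∈ S) (hV : ∀ x ∈ S, ∑ i, p i * V (T x i) ≤ c * V x)
    {x₀ : α} (hx₀ : x₀ ∈ S) :
    ∀ k : ℕ, ∑ w : Fin k → ι, (∏ j, p (w j)) * V (wordIterate T x₀ k w) ≤ c ^ k * V x₀
  | 0 => by simp
  | k + 1 => calc
      _ = ∑ w : Fin k → ι, (∏ j, p (w j)) * ∑ i, p i * V (T (wordIterate T x₀ k w) i) := by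
        simp only [Fin.sum_prod_mul_snoc, wordIterate.snoc]
      _ ≤ ∑ w : Fin k → ι, (∏ j, p (w j)) * (c * V (wordIterate T x₀ k w)) := by
        gcongr with w
        · exact Finset.prod_nonneg fun j _ => hp (w j)
        · exact hV _ (wordIterate.mem T x₀ hS hx₀ w)
      _ = c * ∑ w : Fin k → ι, (∏ j, p (w j)) * V (wordIterate T x₀ k w) := by
        rw [Finset.mul_sum]
        exact Fintype.sum_congr _ _ fun w => by ring
      _ ≤ c * (c ^ k * V x₀) := by gcongr; exact sum_prod_mul_wordIterate_le hp hc hS hV hx₀ k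
      _ = c ^ (k + 1) * V x₀ := by ring

open ProbabilityTheory in
theorem integral_comp_fun_eq_sum_prod {Ω ι : Type*} [MeasurableSpace Ω] {μ : Measure Ω}
    [IsProbabilityMeasure μ] [Fintype ι] [MeasurableSpace ι] [MeasurableSingletonClass ι]
    {p : ι → ℝ} (hp : ∀ i, 0 ≤ p i) {ξ : ℕ → Ω → ι} (hmeas : ∀ k, Measurable (ξ k))
    (hindep : iIndepFun ξ μ) (hdist : ∀ k i, μ {ω | ξ k ω = i} = ENNReal.ofReal (p i))
    (k : ℕ) (φ : (Fin k → ι) → ℝ) :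
    ∫ ω, φ (fun j => ξ j ω) ∂μ = ∑ w, (∏ j, p (w j)) * φ w := by
  have hT : Measurable fun ω (j : Fin k) => ξ j ω := measurable_pi_lambda _ fun j => hmeas j
  have hindep' : iIndepFun (fun j : Fin k => ξ j) μ := hindep.precomp Fin.val_injective
  have hlaw : μ.map (fun ω (j : Fin k) => ξ j ω) = Measure.pi fun j : Fin k => μ.map (ξ j) :=
    hindep'.map_fun_eq_pi_map (f := fun j : Fin k => ξ j) fun j => (hmeas j).aemeasurable
  rw [← integral_map hT.aemeasurable (measurable_of_countable φ).aestronglyMeasurable, hlaw,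
    integral_fintype .of_finite]
  refine Fintype.sum_congr _ _ fun w => ?_
  have hsingleton : ∀ j : Fin k, μ.map (ξ j) {w j} = ENNReal.ofReal (p (w j)) := fun j => by
    rw [Measure.map_apply (hmeas j) (measurableSet_singleton _)]
    exact hdist j (w j)
  simp [measureReal_def, hsingleton, ENNReal.toReal_prod, hp]

section Projection

variable {E : Type*} [NormedAddCommGroup E] [InnerProductSpace ℝ E]

lemma norm_sub_inner_div_smul_sq (a e : E) :
    ‖e - (⟪a, e⟫_ℝ / ‖a‖ ^ 2) • a‖ ^ 2 = ‖e‖ ^ 2 - ⟪‖a‖⁻¹ • a, e⟫_ℝ ^ 2 := by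
  rcases eq_or_ne a 0 with rfl | ha
  · simp
  have ha' : ‖a‖ ≠ 0 := norm_ne_zero_iff.mpr ha
  rw [norm_sub_sq_real, real_inner_smul_right, real_inner_smul_left, norm_smul,
    Real.norm_eq_abs, mul_pow, sq_abs, real_inner_comm]
  field_simp
  ring

lemma mul_norm_sq_le_sum_inner_sq {ι : Type*} [Fintype ι] {p : ι → ℝ} {u : ι → E}
    {P : E → Prop} (hP : ∀ (c : ℝ) (e : E), P e → P (c • e)) {lam : ℝ}
    (hlam : lam ∈ lowerBounds {r | ∃ s : E, ‖s‖ = 1 ∧ P s ∧ r = ∑ i, p i * ⟪u i, s⟫_ℝ ^ 2})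
    {e : E} (he : P e) :
    lam * ‖e‖ ^ 2 ≤ ∑ i, p i * ⟪u i, e⟫_ℝ ^ 2 := by
  rcases eq_or_ne e 0 with rfl | he0
  · simp
  have hnorm : 0 < ‖e‖ := norm_pos_iff.mpr he0
  have hunit := hlam ⟨‖e‖⁻¹ • e, norm_smul_inv_norm he0, hP _ _ he, rfl⟩
  have hscale : ∑ i, p i * ⟪u i, ‖e‖⁻¹ • e⟫_ℝ ^ 2 = (∑ i, p i * ⟪u i, e⟫_ℝ ^ 2) / ‖e‖ ^ 2 := by
    simp only [real_inner_smul_right, Finset.sum_div]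
    exact Fintype.sum_congr _ _ fun i => by field_simp
  rwa [hscale, le_div_iff₀ (by positivity)] at hunit

theorem sum_mul_norm_sub_inner_div_smul_sq_le {ι : Type*} [Fintype ι] {p : ι → ℝ}
    (hpsum : ∑ i, p i = 1) {a : ι → E} {P : E → Prop} (hP : ∀ (c : ℝ) (e : E), P e → P (c • e))
    {lam : ℝ} (hlam : lam ∈ lowerBounds
      {r | ∃ s : E, ‖s‖ = 1 ∧ P s ∧ r = ∑ i, p i * ⟪‖a i‖⁻¹ • a i, s⟫_ℝ ^ 2})
    {e : E} (he : P e) :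
    ∑ i, p i * ‖e - (⟪a i, e⟫_ℝ / ‖a i‖ ^ 2) • a i‖ ^ 2 ≤ (1 - lam) * ‖e‖ ^ 2 := by
  have hbound := mul_norm_sq_le_sum_inner_sq hP hlam he
  calc ∑ i, p i * ‖e - (⟪a i, e⟫_ℝ / ‖a i‖ ^ 2) • a i‖ ^ 2
      = ‖e‖ ^ 2 - ∑ i, p i * ⟪‖a i‖⁻¹ • a i, e⟫_ℝ ^ 2 := by
        simp only [norm_sub_inner_div_smul_sq, mul_sub, Finset.sum_sub_distrib,
          ← Finset.sum_mul, hpsum, one_mul]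
    _ ≤ (1 - lam) * ‖e‖ ^ 2 := by linarith

end Projection

section Kaczmarz

variable {m n : ℕ} (A : Matrix (Fin m) (Fin n) ℝ) (b : Fin m → ℝ)

noncomputable def kaczmarzStep (x : EuclideanSpace ℝ (Fin n)) (i : Fin m) :
    EuclideanSpace ℝ (Fin n) :=
  x + ((b i - ⟪A.rowE i, x⟫_ℝ) / ‖A.rowE i‖ ^ 2) • A.rowE i

lemma Matrix.inner_rowE (i : Fin m) (x : EuclideanSpace ℝ (Fin n)) :
    ⟪A.rowE i, x⟫_ℝ = A.mulVec x i := by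
  simp [Matrix.rowE, Matrix.mulVec, dotProduct, PiLp.inner_apply, mul_comm]

variable {A b} {xstar : EuclideanSpace ℝ (Fin n)}

lemma kaczmarzStep_sub (hxstar : A.mulVec xstar = b) (x : EuclideanSpace ℝ (Fin n))
    (i : Fin m) :
    kaczmarzStep A b x i - xstar =
      (x - xstar) - (⟪A.rowE i, x - xstar⟫_ℝ / ‖A.rowE i‖ ^ 2) • A.rowE i := by
  have hb : b i = ⟪A.rowE i, xstar⟫_ℝ := by rw [Matrix.inner_rowE, hxstar]
  rw [kaczmarzStep, hb, inner_sub_right, ← neg_sub ⟪A.rowE i, x⟫_ℝ, neg_div, neg_smul]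
  abel

lemma inner_kaczmarzStep_sub_eq_zero (hxstar : A.mulVec xstar = b)
    {x z : EuclideanSpace ℝ (Fin n)} (hz : A.mulVec z = 0) (hx : ⟪z, x - xstar⟫_ℝ = 0)
    (i : Fin m) : ⟪z, kaczmarzStep A b x i - xstar⟫_ℝ = 0 := by
  have hrow : ⟪z, A.rowE i⟫_ℝ = 0 := by
    rw [real_inner_comm, Matrix.inner_rowE, hz, Pi.zero_apply]
  rw [kaczmarzStep_sub hxstar, inner_sub_right, real_inner_smul_right, hx, hrow, mul_zero,
    sub_zero]

end Kaczmarz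

theorem randomized_kaczmarz_mean_square_error_general
    (m n : ℕ) (A : Matrix (Fin m) (Fin n) ℝ) (b : Fin m → ℝ)
    (p : Fin m → ℝ) (hp : ∀ i, 0 < p i) (hpsum : ∑ i, p i = 1)
    (Ω : Type) [MeasurableSpace Ω] (μ : Measure Ω) [IsProbabilityMeasure μ]
    (ξ : ℕ → Ω → Fin m) (hmeas : ∀ k, Measurable (ξ k))
    (hindep : ProbabilityTheory.iIndepFun ξ μ)
    (hdist : ∀ (k : ℕ) (i : Fin m), μ {ω | ξ k ω = i} = ENNReal.ofReal (p i))
    (x0 : EuclideanSpace ℝ (Fin n))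
    (X : ℕ → Ω → EuclideanSpace ℝ (Fin n))
    (hX0 : ∀ ω, X 0 ω = x0)
    (hXstep : ∀ (k : ℕ) (ω : Ω), X (k + 1) ω = X k ω +
      ((b (ξ k ω) - ⟪A.rowE (ξ k ω), X k ω⟫_ℝ) / ‖A.rowE (ξ k ω)‖ ^ 2) • A.rowE (ξ k ω))
    (xstar : EuclideanSpace ℝ (Fin n))
    (hxstar : A.mulVec xstar = b)
    (hxorth : ∀ z : EuclideanSpace ℝ (Fin n), A.mulVec z = 0 → ⟪z, xstar - x0⟫_ℝ = 0)
    (lammin : ℝ)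
    (hlam : IsLeast {r : ℝ | ∃ s : EuclideanSpace ℝ (Fin n), ‖s‖ = 1 ∧
      (∀ z : EuclideanSpace ℝ (Fin n), A.mulVec z = 0 → ⟪z, s⟫_ℝ = 0) ∧
      r = ∑ i, p i * ⟪A.nrowE i, s⟫_ℝ ^ 2} lammin)
    (hlam01 : lammin ∈ Set.Ioo (0 : ℝ) 1) :
    ∀ k : ℕ, ∫ ω, ‖X k ω - xstar‖ ^ 2 ∂μ ≤ (1 - lammin) ^ k * ‖x0 - xstar‖ ^ 2 := by
  set S := {x : EuclideanSpace ℝ (Fin n) |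
    ∀ z : EuclideanSpace ℝ (Fin n), A.mulVec z = 0 → ⟪z, x - xstar⟫_ℝ = 0}
  have hS : ∀ x ∈ S, ∀ i, kaczmarzStep A b x i ∈ S := fun x hx i z hz =>
    inner_kaczmarzStep_sub_eq_zero hxstar hz (hx z hz) i
  have hx0 : x0 ∈ S := fun z hz => by rw [← neg_sub, inner_neg_right, hxorth z hz, neg_zero]
  have hcontract : ∀ x ∈ S, ∑ i, p i * ‖kaczmarzStep A b x i - xstar‖ ^ 2 ≤
      (1 - lammin) * ‖x - xstar‖ ^ 2 := fun x hx => by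
    simp only [kaczmarzStep_sub hxstar]
    refine sum_mul_norm_sub_inner_div_smul_sq_le hpsum (fun c e he z hz => ?_) hlam.2 hx
    rw [real_inner_smul_right, he z hz, mul_zero]
  have hpath : ∀ k ω, X k ω = wordIterate (kaczmarzStep A b) x0 k (fun j => ξ j ω) := by
    intro k ω
    induction k with
    | zero => exact hX0 ω
    | succ k ih => rw [hXstep, ih]; rfl
  intro k
  simp only [hpath]
  rw [integral_comp_fun_eq_sum_prod (fun i => (hp i).le) hmeas hindep hdist k
    fun w => ‖wordIterate (kaczmarzStep A b) x0 k w - xstar‖ ^ 2]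
  exact sum_prod_mul_wordIterate_le (V := fun x => ‖x - xstar‖ ^ 2) (fun i => (hp i).le) (sub_nonneg.mpr hlam01.2.le) hS
    hcontract hx0 k

/-- Exponential decay of the mean squared error of the randomized Kaczmarz scheme:
if `λ_min ∈ (0,1)`, then `E[‖e(n)‖²] ≤ (1 - λ_min)^n ‖e(0)‖²`. -/
theorem randomized_kaczmarz_mean_square_error
    (m n : ℕ) (A : Matrix (Fin m) (Fin n) ℝ) (b : Fin m → ℝ)
    (hrows : ∀ i, A.rowE i ≠ 0)
    (hconsistent : ∃ x : EuclideanSpace ℝ (Fin n), A.mulVec x = b)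
    (p : Fin m → ℝ) (hp : ∀ i, 0 < p i) (hpsum : ∑ i, p i = 1)
    (Ω : Type) [MeasurableSpace Ω] (μ : Measure Ω) [IsProbabilityMeasure μ]
    (ξ : ℕ → Ω → Fin m) (hmeas : ∀ k, Measurable (ξ k))
    (hindep : ProbabilityTheory.iIndepFun ξ μ)
    (hdist : ∀ (k : ℕ) (i : Fin m), μ {ω | ξ k ω = i} = ENNReal.ofReal (p i))
    (x0 : EuclideanSpace ℝ (Fin n))
    (X : ℕ → Ω → EuclideanSpace ℝ (Fin n))
    (hX0 : ∀ ω, X 0 ω = x0)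
    (hXstep : ∀ (k : ℕ) (ω : Ω), X (k + 1) ω = X k ω +
      ((b (ξ k ω) - ⟪A.rowE (ξ k ω), X k ω⟫_ℝ) / ‖A.rowE (ξ k ω)‖ ^ 2) • A.rowE (ξ k ω))
    (xstar : EuclideanSpace ℝ (Fin n))
    (hxstar : A.mulVec xstar = b)
    (hxorth : ∀ z : EuclideanSpace ℝ (Fin n), A.mulVec z = 0 → ⟪z, xstar - x0⟫_ℝ = 0)
    (lammin : ℝ)
    (hlam : IsLeast {r : ℝ | ∃ s : EuclideanSpace ℝ (Fin n), ‖s‖ = 1 ∧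
      (∀ z : EuclideanSpace ℝ (Fin n), A.mulVec z = 0 → ⟪z, s⟫_ℝ = 0) ∧
      r = ∑ i, p i * ⟪A.nrowE i, s⟫_ℝ ^ 2} lammin)
    (hlam01 : lammin ∈ Set.Ioo (0 : ℝ) 1) :
    ∀ k : ℕ, ∫ ω, ‖X k ω - xstar‖ ^ 2 ∂μ ≤ (1 - lammin) ^ k * ‖x0 - xstar‖ ^ 2 :=
  randomized_kaczmarz_mean_square_error_general m n A b p hp hpsum Ω μ ξ hmeas hindep hdist x0 X hX0
    hXstep xstar hxstar hxorth lammin hlam hlam01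
end

section
/- Let G be a connected finite simple graph on N vertices with M edges, with an orientation giving incidence matrix L ∈ ℝ^{N×M}, and let λ_min and λ_max denote the smallest nonzero and largest eigenvalues of the Laplacian LLᵀ. Suppose v, v̂ ∈ ℝ^N both have coordinates summing to zero and satisfy the normal equations LLᵀ v = L y' and LLᵀ v̂ = L y for vectors y', y ∈ ℝ^M. If |y_e − y'_e| ≤ δ for every edge e, then ‖v̂ − v‖ ≤ √(λ_max · M) · δ / λ_min. -/
open Matrix

def toE {n : ℕ} (v : Fin n → ℝ) : EuclideanSpace ℝ (Fin n) := WithLp.toLp 2 v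

/-!
Write `w = v̂ - v` and `z = y - y'`, so that `LLᵀ w = L z`. Since `w` sums to zero and the
kernel of the Laplacian of a connected graph consists of the constants, `w` is orthogonal to that
kernel; expanding in an orthonormal eigenbasis then gives `λ_min ‖w‖ ≤ ‖LLᵀ w‖`. On the other side,
`‖Lᵀ u‖² = ⟪LLᵀ u, u⟫ ≤ λ_max ‖u‖²`, and Cauchy–Schwarz in `‖L z‖² = ⟪Lᵀ L z, z⟫` turns this into
`‖L z‖ ≤ √λ_max ‖z‖`. Finally `‖z‖ ≤ √M δ`.
-/

open Module End
open scoped InnerProductSpace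

namespace LinearMap.IsSymmetric

variable {𝕜 E : Type*} [RCLike 𝕜] [NormedAddCommGroup E] [InnerProductSpace 𝕜 E]
  [FiniteDimensional 𝕜 E] {T : E →ₗ[𝕜] E} {n : ℕ}

theorem inner_eigenvectorBasis_apply (hT : T.IsSymmetric) (hn : finrank 𝕜 E = n) (i : Fin n)
    (x : E) :
    ⟪hT.eigenvectorBasis hn i, T x⟫_𝕜 = hT.eigenvalues hn i * ⟪hT.eigenvectorBasis hn i, x⟫_𝕜 := by
  simpa only [OrthonormalBasis.repr_apply_apply] using hT.eigenvectorBasis_apply_self_apply hn x i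

theorem norm_apply_sq_eq_sum (hT : T.IsSymmetric) (hn : finrank 𝕜 E = n) (x : E) :
    ‖T x‖ ^ 2 = ∑ i, hT.eigenvalues hn i ^ 2 * ‖⟪hT.eigenvectorBasis hn i, x⟫_𝕜‖ ^ 2 := by
  simp only [← (hT.eigenvectorBasis hn).sum_sq_norm_inner_right, inner_eigenvectorBasis_apply,
    norm_mul, RCLike.norm_ofReal, mul_pow, sq_abs]

theorem re_inner_apply_self_eq_sum (hT : T.IsSymmetric) (hn : finrank 𝕜 E = n) (x : E) :
    RCLike.re ⟪T x, x⟫_𝕜 = ∑ i, hT.eigenvalues hn i * ‖⟪hT.eigenvectorBasis hn i, x⟫_𝕜‖ ^ 2 := by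
  rw [hT, ← (hT.eigenvectorBasis hn).sum_inner_mul_inner, map_sum]
  refine Finset.sum_congr rfl fun i _ => ?_
  rw [inner_eigenvectorBasis_apply, mul_left_comm, ← inner_conj_symm, RCLike.conj_mul,
    ← RCLike.ofReal_pow, ← RCLike.ofReal_mul, RCLike.ofReal_re]

theorem re_inner_apply_self_le (hT : T.IsSymmetric) {c : ℝ}
    (hc : ∀ μ : ℝ, HasEigenvalue T μ → μ ≤ c) (x : E) :
    RCLike.re ⟪T x, x⟫_𝕜 ≤ c * ‖x‖ ^ 2 := by
  rw [hT.re_inner_apply_self_eq_sum rfl, ← (hT.eigenvectorBasis rfl).sum_sq_norm_inner_right,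
    Finset.mul_sum]
  gcongr with i
  exact hc _ (hT.hasEigenvalue_eigenvalues rfl i)

theorem mul_norm_le_norm_apply (hT : T.IsSymmetric) {m : ℝ}
    (hm : ∀ μ : ℝ, HasEigenvalue T μ → μ ≠ 0 → m ≤ |μ|) {x : E} (hx : x ∈ (ker T)ᗮ) :
    m * ‖x‖ ≤ ‖T x‖ := by
  obtain hm0 | hm0 := lt_or_ge m 0
  · exact (mul_nonpos_of_nonpos_of_nonneg hm0.le (norm_nonneg x)).trans (norm_nonneg _)
  refine pow_le_pow_iff_left₀ (by positivity) (norm_nonneg _) two_ne_zero |>.1 ?_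
  rw [hT.norm_apply_sq_eq_sum rfl, mul_pow, ← (hT.eigenvectorBasis rfl).sum_sq_norm_inner_right,
    Finset.mul_sum]
  refine Finset.sum_le_sum fun i _ => ?_
  by_cases hμ : hT.eigenvalues rfl i = 0
  · have hb : hT.eigenvectorBasis rfl i ∈ ker T := by simp [hμ]
    simp [Submodule.inner_right_of_mem_orthogonal hb hx]
  · rw [← sq_abs (hT.eigenvalues rfl i)]
    gcongr
    exact hm _ (hT.hasEigenvalue_eigenvalues rfl i) hμ

end LinearMap.IsSymmetric

namespace LinearMap

variable {𝕜 E F : Type*} [RCLike 𝕜] [NormedAddCommGroup E] [InnerProductSpace 𝕜 E]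
  [FiniteDimensional 𝕜 E] [NormedAddCommGroup F] [InnerProductSpace 𝕜 F] [FiniteDimensional 𝕜 F]
  {S : F →ₗ[𝕜] E} {c : ℝ}

theorem norm_adjoint_apply_le_sqrt_mul (hc : ∀ μ : ℝ, HasEigenvalue (S ∘ₗ S.adjoint) μ → μ ≤ c)
    (u : E) : ‖S.adjoint u‖ ≤ √c * ‖u‖ := by
  have h := (isPositive_self_comp_adjoint S).isSymmetric.re_inner_apply_self_le hc u
  rw [comp_apply, ← adjoint_inner_right, inner_self_eq_norm_sq] at h
  calc ‖S.adjoint u‖ = √(‖S.adjoint u‖ ^ 2) := (Real.sqrt_sq (norm_nonneg _)).symm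
    _ ≤ √(c * ‖u‖ ^ 2) := Real.sqrt_le_sqrt h
    _ = √c * ‖u‖ := by rw [Real.sqrt_mul' _ (sq_nonneg _), Real.sqrt_sq (norm_nonneg _)]

theorem norm_apply_le_sqrt_mul (hc : ∀ μ : ℝ, HasEigenvalue (S ∘ₗ S.adjoint) μ → μ ≤ c)
    (z : F) : ‖S z‖ ≤ √c * ‖z‖ := by
  have h : ‖S z‖ * ‖S z‖ ≤ √c * ‖z‖ * ‖S z‖ :=
    calc ‖S z‖ * ‖S z‖ = RCLike.re ⟪S.adjoint (S z), z⟫_𝕜 := by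
          rw [adjoint_inner_left, inner_self_eq_norm_mul_norm]
      _ ≤ ‖S.adjoint (S z)‖ * ‖z‖ := re_inner_le_norm _ _
      _ ≤ √c * ‖S z‖ * ‖z‖ := by gcongr; exact norm_adjoint_apply_le_sqrt_mul hc _
      _ = √c * ‖z‖ * ‖S z‖ := by ring
  obtain h0 | h0 := (norm_nonneg (S z)).eq_or_lt
  · rw [← h0]
    positivity
  · exact le_of_mul_le_mul_right h h0

end LinearMap

theorem Matrix.hasEigenvalue_toEuclideanLin_iff {𝕜 n : Type*} [RCLike 𝕜] [Fintype n]
    [DecidableEq n] {A : Matrix n n 𝕜} {μ : 𝕜} :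
    HasEigenvalue (toEuclideanLin A) μ ↔
      ∃ x : EuclideanSpace 𝕜 n, x ≠ 0 ∧ A *ᵥ x.ofLp = μ • x.ofLp := by
  constructor
  · intro h
    obtain ⟨x, hx⟩ := h.exists_hasEigenvector
    rw [hasEigenvector_iff, mem_eigenspace_iff] at hx
    exact ⟨x, hx.2, congrArg WithLp.ofLp hx.1⟩
  · rintro ⟨x, hx0, hx⟩
    refine hasEigenvalue_of_hasEigenvector (hasEigenvector_iff.2 ⟨mem_eigenspace_iff.2 ?_, hx0⟩)
    exact WithLp.ofLp_injective 2 (by simpa [toLpLin_apply] using hx)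

theorem SimpleGraph.Connected.mem_orthogonal_ker_lapMatrix {V : Type*} [Fintype V]
    [DecidableEq V] {G : SimpleGraph V} [DecidableRel G.Adj] (hG : G.Connected)
    {x : EuclideanSpace ℝ V} (hx : ∑ i, x i = 0) :
    x ∈ (LinearMap.ker (toEuclideanLin (G.lapMatrix ℝ)))ᗮ := by
  refine (Submodule.mem_orthogonal _ x).2 fun u hu => ?_
  have hu' : G.lapMatrix ℝ *ᵥ u.ofLp = 0 := congrArg WithLp.ofLp hu
  have hconst : ∀ i j, u i = u j := fun i j =>
    (G.lapMatrix_mulVec_eq_zero_iff_forall_reachable.1 hu') i j (hG.preconnected i j)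
  obtain ⟨i₀⟩ := hG.nonempty
  simp [PiLp.inner_apply, hconst _ i₀, ← Finset.sum_mul, hx]

theorem EuclideanSpace.norm_le_sqrt_card_mul {𝕜 ι : Type*} [RCLike 𝕜] [Fintype ι]
    {x : EuclideanSpace 𝕜 ι} {δ : ℝ} (h : ∀ i, ‖x i‖ ≤ δ) :
    ‖x‖ ≤ √(Fintype.card ι) * δ := by
  cases isEmpty_or_nonempty ι
  · simp [Subsingleton.elim x 0]
  have hδ : 0 ≤ δ := (norm_nonneg _).trans (h (Classical.arbitrary ι))
  rw [EuclideanSpace.norm_eq, ← Real.sqrt_sq hδ, ← Real.sqrt_mul (Nat.cast_nonneg _)]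
  gcongr
  calc ∑ i, ‖x i‖ ^ 2 ≤ ∑ _i : ι, δ ^ 2 := by gcongr; exact h _
    _ = Fintype.card ι * δ ^ 2 := by simp

theorem laplacian_normal_equation_error_bound_general
    (N M : ℕ) (G : SimpleGraph (Fin N)) [DecidableRel G.Adj]
    (hconn : G.Connected)
    (L : Matrix (Fin N) (Fin M) ℝ)
    (hLap : L * Lᵀ = G.lapMatrix ℝ)
    (lammin lammax : ℝ)
    (hmin : IsLeast {μ : ℝ | μ ≠ 0 ∧
      ∃ x : EuclideanSpace ℝ (Fin N), x ≠ 0 ∧ (G.lapMatrix ℝ).mulVec x = μ • x} lammin)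
    (hmax : IsGreatest {μ : ℝ |
      ∃ x : EuclideanSpace ℝ (Fin N), x ≠ 0 ∧ (G.lapMatrix ℝ).mulVec x = μ • x} lammax)
    (v vhat : EuclideanSpace ℝ (Fin N)) (y' y : Fin M → ℝ) (δ : ℝ)
    (hv : ∑ i, v i = 0) (hvhat : ∑ i, vhat i = 0)
    (heq1 : (G.lapMatrix ℝ).mulVec v = L.mulVec y')
    (heq2 : (G.lapMatrix ℝ).mulVec vhat = L.mulVec y)
    (hδ : ∀ e : Fin M, |y e - y' e| ≤ δ) :
    ‖vhat - v‖ ≤ Real.sqrt (lammax * M) * δ / lammin := by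
  set T := toEuclideanLin (G.lapMatrix ℝ)
  have hT : T.IsPositive := isPositive_toEuclideanLin_iff.2 (G.posSemidef_lapMatrix ℝ)
  -- Over `ℝ`, the coercion `ℝ → 𝕜` in the lemmas above is `RCLike.ofReal`, not literally `id`.
  have hev : ∀ μ : ℝ, HasEigenvalue T (RCLike.ofReal μ) ↔
      ∃ x : EuclideanSpace ℝ (Fin N), x ≠ 0 ∧ (G.lapMatrix ℝ).mulVec x = μ • x := fun μ => by
    rw [RCLike.ofReal_real_eq_id, id, hasEigenvalue_toEuclideanLin_iff]
  have hlammin : 0 < lammin :=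
    (eigenvalue_nonneg_of_nonneg ((hev _).2 hmin.1.2) hT.re_inner_nonneg_right).lt_of_ne' hmin.1.1
  have hLLT : toEuclideanLin L ∘ₗ (toEuclideanLin L).adjoint = T := by
    rw [← toEuclideanLin_conjTranspose_eq_adjoint, ← toLpLin_mul,
      conjTranspose_eq_transpose_of_trivial, hLap]
  have hdiff : T (vhat - v) = toEuclideanLin L (toE (y - y')) := by
    ext i
    simp [T, toE, toLpLin_apply, mulVec_sub, heq1, heq2]
  have hlow : lammin * ‖vhat - v‖ ≤ ‖T (vhat - v)‖ :=
    hT.isSymmetric.mul_norm_le_norm_apply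
      (fun μ hμ hμ0 => (hmin.2 ⟨hμ0, (hev μ).1 hμ⟩).trans (le_abs_self μ))
      (hconn.mem_orthogonal_ker_lapMatrix (by simp [Finset.sum_sub_distrib, hv, hvhat]))
  rw [le_div_iff₀ hlammin, mul_comm]
  calc lammin * ‖vhat - v‖ ≤ ‖toEuclideanLin L (toE (y - y'))‖ := hdiff ▸ hlow
    _ ≤ √lammax * ‖toE (y - y')‖ :=
      (toEuclideanLin L).norm_apply_le_sqrt_mul
        (hLLT ▸ fun μ hμ => hmax.2 ((hev μ).1 hμ)) _
    _ ≤ √lammax * (√M * δ) := by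
      gcongr
      simpa using EuclideanSpace.norm_le_sqrt_card_mul (x := toE (y - y'))
        fun e => by simpa [toE] using hδ e
    _ = √(lammax * M) * δ := by rw [Real.sqrt_mul' _ (Nat.cast_nonneg M), mul_assoc]

/-- Error propagation through the normal equations of a connected graph: if `v` and `v̂` both
have coordinates summing to zero and satisfy `LLᵀ v = L y'` and `LLᵀ v̂ = L y`, where `L` is an
oriented incidence matrix of a connected graph `G` (so that `LLᵀ` is the graph Laplacian), and
the entries of `y` and `y'` differ by at most `δ`, then `‖v̂ - v‖ ≤ √(λ_max M) δ / λ_min`. -/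
theorem laplacian_normal_equation_error_bound
    (N M : ℕ) (G : SimpleGraph (Fin N)) [DecidableRel G.Adj]
    (hconn : G.Connected) (hM : G.edgeFinset.card = M)
    (L : Matrix (Fin N) (Fin M) ℝ)
    (hinc : ∀ e : Fin M, ∃ i j : Fin N, G.Adj i j ∧ L i e = 1 ∧ L j e = -1 ∧
      ∀ k : Fin N, k ≠ i → k ≠ j → L k e = 0)
    (hLap : L * Lᵀ = G.lapMatrix ℝ)
    (lammin lammax : ℝ)
    (hmin : IsLeast {μ : ℝ | μ ≠ 0 ∧
      ∃ x : EuclideanSpace ℝ (Fin N), x ≠ 0 ∧ (G.lapMatrix ℝ).mulVec x = μ • x} lammin)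
    (hmax : IsGreatest {μ : ℝ |
      ∃ x : EuclideanSpace ℝ (Fin N), x ≠ 0 ∧ (G.lapMatrix ℝ).mulVec x = μ • x} lammax)
    (v vhat : EuclideanSpace ℝ (Fin N)) (y' y : Fin M → ℝ) (δ : ℝ)
    (hv : ∑ i, v i = 0) (hvhat : ∑ i, vhat i = 0)
    (heq1 : (G.lapMatrix ℝ).mulVec v = L.mulVec y')
    (heq2 : (G.lapMatrix ℝ).mulVec vhat = L.mulVec y)
    (hδ : ∀ e : Fin M, |y e - y' e| ≤ δ) :
    ‖vhat - v‖ ≤ Real.sqrt (lammax * M) * δ / lammin :=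
  laplacian_normal_equation_error_bound_general N M G hconn L hLap lammin lammax hmin hmax v vhat y'
    y δ hv hvhat heq1 heq2 hδ
end
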